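/- arXiv:2012.08841 — 3 statements merged into one kernel-verified Lean document; each statement's English description precedes it below -/
import Mathlib

section
/- Let (X,d,mu) be a path-metric measure space satisfying the R-doubling property, and let 0 < r <= R. Then there are constants C, D > 0 depending only on the doubling constant such that for all x, y in X, mu(B(x,r)) <= C * exp(D * d(x,y) / r) * mu(B(y,r)). -/
/-!
A point at distance less than `(n + 1) r` from `y` is joined to `y` by a chain of `n + 1` steps of
length less than `r`, since a length space has approximate midpoints in every ratio. Across each
step the doubling property compares the two `r`-balls with a factor `A`, because each ball lies in
the doubled ball around the other centre. Hence the ratio of the measures is at most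
`A ^ (n + 1) ≤ A * exp (log A * d(x, y) / r)`.
-/

open MeasureTheory Metric Set

/-- A path-metric (length) space: the distance is the infimum of lengths of
paths, which implies the existence of approximate intermediate points. -/
def IsLengthSpace (X : Type*) [MetricSpace X] : Prop :=
  ∀ x y : X, ∀ t ∈ Set.Icc (0:ℝ) (dist x y), ∀ ε > (0:ℝ),
    ∃ z : X, dist x z ≤ t + ε ∧ dist z y ≤ dist x y - t + ε

namespace IsLengthSpace

variable {X : Type*} [MetricSpace X]

theorem exists_dist_lt_dist_lt (hX : IsLengthSpace X) {x y : X} {a b : ℝ} (ha : 0 < a)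
    (hb : 0 < b) (h : dist x y < a + b) : ∃ z, dist x z < a ∧ dist z y < b := by
  have hab : 0 < a + b := by linarith
  -- split `dist x y` in the ratio `a : b`
  set t := a * dist x y / (a + b) with ht
  have hta : t < a := by rw [ht, div_lt_iff₀ hab]; nlinarith
  have htb : dist x y - t < b := by
    have : dist x y - t = b * dist x y / (a + b) := by rw [ht]; field_simp; ring
    rw [this, div_lt_iff₀ hab]; nlinarith
  have ht_mem : t ∈ Icc 0 (dist x y) := by
    refine ⟨by positivity, ?_⟩
    rw [ht, div_le_iff₀ hab]; nlinarith [dist_nonneg (x := x) (y := y)]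
  obtain ⟨z, hxz, hzy⟩ := hX x y t ht_mem (min (a - t) (b - (dist x y - t)) / 2)
    (by apply half_pos; apply lt_min <;> linarith)
  refine ⟨z, ?_, ?_⟩
  · linarith [min_le_left (a - t) (b - (dist x y - t))]
  · linarith [min_le_right (a - t) (b - (dist x y - t))]

theorem le_pow_mul_of_dist_lt (hX : IsLengthSpace X) {f : X → ℝ} {A r : ℝ} (hA : 0 ≤ A)
    (hr : 0 < r) (hf : ∀ x y, dist x y < r → f x ≤ A * f y) (n : ℕ) :
    ∀ x y, dist x y < (n + 1) * r → f x ≤ A ^ (n + 1) * f y := by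
  induction n with
  | zero => simpa using hf
  | succ n ih =>
    intro x y hxy
    obtain ⟨z, hxz, hzy⟩ := hX.exists_dist_lt_dist_lt (b := (n + 1) * r) hr (by positivity)
      (by push_cast at hxy; linarith)
    calc f x ≤ A * f z := hf x z hxz
      _ ≤ A * (A ^ (n + 1) * f y) := mul_le_mul_of_nonneg_left (ih z y hzy) hA
      _ = A ^ (n + 1 + 1) * f y := by ring

theorem le_mul_exp_mul_of_dist_lt (hX : IsLengthSpace X) {f : X → ℝ} {A r : ℝ} (hA : 1 ≤ A)
    (hr : 0 < r) (hf : ∀ x y, dist x y < r → f x ≤ A * f y) (x y : X) (hfy : 0 ≤ f y) :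
    f x ≤ A * Real.exp (Real.log A * dist x y / r) * f y := by
  set n := ⌊dist x y / r⌋₊
  have hxy : dist x y < (n + 1) * r := by
    rw [← div_lt_iff₀ hr]; exact Nat.lt_floor_add_one _
  have hpow : A ^ n ≤ Real.exp (Real.log A * dist x y / r) := by
    rw [← Real.rpow_natCast, mul_div_assoc, ← Real.rpow_def_of_pos (by linarith)]
    exact Real.rpow_le_rpow_of_exponent_le hA (Nat.floor_le (by positivity))
  calc f x ≤ A ^ (n + 1) * f y := hX.le_pow_mul_of_dist_lt (by linarith) hr hf n x y hxy
    _ = A * A ^ n * f y := by ring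
    _ ≤ A * Real.exp (Real.log A * dist x y / r) * f y := by gcongr

end IsLengthSpace

theorem measure_ball_toReal_le_of_dist_lt {X : Type*} [MetricSpace X] [MeasurableSpace X]
    {μ : Measure X} {x y : X} {r : ℝ} (hfin : μ (ball y (2 * r)) ≠ ⊤) (hxy : dist x y < r) :
    (μ (ball x r)).toReal ≤ (μ (ball y (2 * r))).toReal :=
  ENNReal.toReal_mono hfin (measure_mono (ball_subset_ball' (by linarith)))

theorem stmt6_general {X : Type*} [MetricSpace X] [MeasurableSpace X] (μ : Measure X)
    (hlen : IsLengthSpace X)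
    (hfin : ∀ (x : X) (r : ℝ), μ (ball x r) < ⊤)
    (A R : ℝ) (hA : 1 < A)
    (hdoub : ∀ (x : X) (r : ℝ), 0 < r → r ≤ R →
      (μ (ball x (2 * r))).toReal ≤ A * (μ (ball x r)).toReal)
    (r : ℝ) (hr : 0 < r) (hrR : r ≤ R) :
    ∃ C > (0:ℝ), ∃ D > (0:ℝ), ∀ x y : X,
      (μ (ball x r)).toReal ≤
        C * Real.exp (D * dist x y / r) * (μ (ball y r)).toReal := by
  have hstep : ∀ x y, dist x y < r → (μ (ball x r)).toReal ≤ A * (μ (ball y r)).toReal :=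
    fun x y hxy =>
      (measure_ball_toReal_le_of_dist_lt (hfin y _).ne hxy).trans (hdoub y r hr hrR)
  exact ⟨A, by linarith, Real.log A, Real.log_pos hA, fun x y =>
    hlen.le_mul_exp_mul_of_dist_lt hA.le hr hstep x y ENNReal.toReal_nonneg⟩

theorem stmt6 {X : Type*} [MetricSpace X] [MeasurableSpace X] (μ : Measure X)
    (hlen : IsLengthSpace X)
    (hpos : ∀ (x : X) (r : ℝ), 0 < r → 0 < μ (ball x r))
    (hfin : ∀ (x : X) (r : ℝ), μ (ball x r) < ⊤)
    (A R : ℝ) (hA : 1 < A) (hR : 0 < R)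
    (hdoub : ∀ (x : X) (r : ℝ), 0 < r → r ≤ R →
      (μ (ball x (2 * r))).toReal ≤ A * (μ (ball x r)).toReal)
    (r : ℝ) (hr : 0 < r) (hrR : r ≤ R) :
    ∃ C > (0:ℝ), ∃ D > (0:ℝ), ∀ x y : X,
      (μ (ball x r)).toReal ≤
        C * Real.exp (D * dist x y / r) * (μ (ball y r)).toReal :=
  stmt6_general μ hlen hfin A R hA hdoub r hr hrR
end

section
/- Let (X,d,mu) satisfy the doubling property of order eta (at all scales) and the reverse doubling property of order nu with nu > s > 0. Let d = d(x,y) > 0 and c > 4. Then the integral over t in (0, infinity) of t^{s/2 - 1} * exp(-d^2/(c*t)) / mu(B(x, sqrt(t))) dt is at most C * d^s / mu(B(x,d)), where C depends only on s, c, eta, nu and the doubling and reverse doubling constants. -/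
open MeasureTheory Metric Set ENNReal

/-!
Split the integral at `t = d²`, where `d = dist x y`. For `t ≤ d²`, doubling gives
`μ(B(x,d)) ≤ A (t/d²)^(-η/2) μ(B(x,√t))` and the Gaussian factor is at most `n! (ct/d²)^n`;
taking `n > (η - s)/2` makes the resulting power of `t` integrable at `0`. For `t ≥ d²`, reverse
doubling gives `μ(B(x,d)) ≤ a⁻¹ (t/d²)^(-ν/2) μ(B(x,√t))`, integrable at `∞` since `ν > s`.
Both pieces integrate to a constant times `(d²)^(s/2) = d^s`.
-/

lemma Real.exp_neg_inv_le_factorial_mul_pow {x : ℝ} (hx : 0 < x) (n : ℕ) :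
    Real.exp (-x⁻¹) ≤ n.factorial * x ^ n := by
  rw [Real.exp_neg]
  calc (Real.exp x⁻¹)⁻¹ ≤ (x⁻¹ ^ n / n.factorial)⁻¹ :=
        inv_anti₀ (by positivity) (Real.pow_div_factorial_le_exp _ (inv_nonneg.2 hx.le) n)
    _ = n.factorial * x ^ n := by rw [inv_div, inv_pow, div_inv_eq_mul]

lemma Real.sqrt_div_rpow {t d : ℝ} (ht : 0 ≤ t) (hd : 0 ≤ d) (ν : ℝ) :
    (√t / d) ^ ν = (t / d ^ 2) ^ (ν / 2) := by
  rw [Real.rpow_div_two_eq_sqrt _ (by positivity), Real.sqrt_div' _ (sq_nonneg d),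
    Real.sqrt_sq hd]

lemma Real.div_sqrt_rpow {t d : ℝ} (ht : 0 ≤ t) (hd : 0 ≤ d) (η : ℝ) :
    (d / √t) ^ η = (t / d ^ 2) ^ (-(η / 2)) := by
  rw [← inv_div, Real.inv_rpow (div_nonneg (Real.sqrt_nonneg t) hd), Real.sqrt_div_rpow ht hd,
    Real.rpow_neg (div_nonneg ht (sq_nonneg d))]

lemma Real.rpow_sub_one_mul_div_rpow {t T : ℝ} (ht : 0 < t) (hT : 0 ≤ T) (σ β : ℝ) :
    t ^ (σ - 1) * (t / T) ^ β = T ^ (-β) * t ^ (σ + β - 1) := by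
  rw [Real.div_rpow ht.le hT, Real.rpow_neg hT, show σ + β - 1 = σ - 1 + β by ring,
    Real.rpow_add ht]
  ring

section PowerIntegrals

variable {T σ β γ : ℝ}

lemma integrableOn_Ioc_rpow_sub_one_mul_div_rpow (hT : 0 < T) (h : 0 < σ + β) :
    IntegrableOn (fun t ↦ t ^ (σ - 1) * (t / T) ^ β) (Ioc 0 T) := by
  refine IntegrableOn.congr_fun ?_
    (fun t ht ↦ (Real.rpow_sub_one_mul_div_rpow ht.1 hT.le σ β).symm) measurableSet_Ioc
  rw [← intervalIntegrable_iff_integrableOn_Ioc_of_le hT.le]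
  exact (intervalIntegral.intervalIntegrable_rpow' (by linarith)).const_mul _

lemma integral_Ioc_rpow_sub_one_mul_div_rpow (hT : 0 < T) (h : 0 < σ + β) :
    ∫ t in Ioc 0 T, t ^ (σ - 1) * (t / T) ^ β = T ^ σ / (σ + β) := by
  rw [setIntegral_congr_fun measurableSet_Ioc
      (fun t ht ↦ Real.rpow_sub_one_mul_div_rpow ht.1 hT.le σ β),
    ← intervalIntegral.integral_of_le hT.le, intervalIntegral.integral_const_mul,
    integral_rpow (Or.inl (by linarith)), sub_add_cancel, Real.zero_rpow h.ne', sub_zero,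
    mul_div_assoc', ← Real.rpow_add hT]
  ring_nf

lemma integrableOn_Ioi_rpow_sub_one_mul_div_rpow_neg (hT : 0 < T) (h : σ < γ) :
    IntegrableOn (fun t ↦ t ^ (σ - 1) * (t / T) ^ (-γ)) (Ioi T) :=
  IntegrableOn.congr_fun ((integrableOn_Ioi_rpow_of_lt (by linarith) hT).const_mul _)
    (fun t ht ↦ (Real.rpow_sub_one_mul_div_rpow (hT.trans ht) hT.le σ (-γ)).symm)
    measurableSet_Ioi

lemma integral_Ioi_rpow_sub_one_mul_div_rpow_neg (hT : 0 < T) (h : σ < γ) :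
    ∫ t in Ioi T, t ^ (σ - 1) * (t / T) ^ (-γ) = T ^ σ / (γ - σ) := by
  rw [setIntegral_congr_fun measurableSet_Ioi
      (fun t ht ↦ Real.rpow_sub_one_mul_div_rpow (hT.trans ht) hT.le σ (-γ)),
    integral_const_mul, integral_Ioi_rpow_of_lt (by linarith) hT, sub_add_cancel, neg_neg,
    neg_div, mul_neg, mul_div_assoc', ← Real.rpow_add hT, add_neg_cancel_comm_assoc,
    ← div_neg]
  ring

end PowerIntegrals

lemma ENNReal.ofReal_div_le_ofReal_mul_div {V W : ℝ≥0∞} (hV : V ≠ 0) (hV' : V ≠ ∞)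
    (hW : W ≠ 0) (hW' : W ≠ ∞) {F B : ℝ} (hF : 0 ≤ F) (h : V.toReal ≤ B * W.toReal) :
    ENNReal.ofReal F / W ≤ ENNReal.ofReal (F * B) / V := by
  have hV₀ := ENNReal.toReal_pos hV hV'
  have hW₀ := ENNReal.toReal_pos hW hW'
  rw [← ofReal_toReal hW', ← ofReal_toReal hV', ← ofReal_div_of_pos hW₀,
    ← ofReal_div_of_pos hV₀]
  refine ofReal_le_ofReal ((div_le_div_iff₀ hW₀ hV₀).2 ?_)
  calc F * V.toReal ≤ F * (B * W.toReal) := mul_le_mul_of_nonneg_left h hF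
    _ = F * B * W.toReal := by ring

lemma setLIntegral_le_ofReal_setIntegral_div {S : Set ℝ} (hS : MeasurableSet S)
    {f : ℝ → ℝ≥0∞} {g : ℝ → ℝ} {V : ℝ≥0∞} (hV : V ≠ 0) (hg : IntegrableOn g S)
    (hg₀ : ∀ t ∈ S, 0 ≤ g t) (hfg : ∀ t ∈ S, f t ≤ ENNReal.ofReal (g t) / V) :
    ∫⁻ t in S, f t ≤ ENNReal.ofReal (∫ t in S, g t) / V := by
  calc ∫⁻ t in S, f t ≤ ∫⁻ t in S, ENNReal.ofReal (g t) * V⁻¹ := setLIntegral_mono' hS hfg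
    _ = ENNReal.ofReal (∫ t in S, g t) / V := by
      rw [lintegral_mul_const' _ _ (ENNReal.inv_ne_top.2 hV),
        ofReal_integral_eq_lintegral_ofReal hg (ae_restrict_of_forall_mem hS hg₀), div_eq_mul_inv]

def IsDoublingOfOrder {X : Type*} [MetricSpace X] [MeasurableSpace X] (μ : Measure X)
    (A η : ℝ) : Prop :=
  ∀ (x : X) (r r' : ℝ), 0 < r → r ≤ r' →
    (μ (ball x r')).toReal ≤ A * (r' / r) ^ η * (μ (ball x r)).toReal

def IsReverseDoublingOfOrder {X : Type*} [MetricSpace X] [MeasurableSpace X] (μ : Measure X)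
    (a ν : ℝ) : Prop :=
  ∀ (x : X) (r r' : ℝ), 0 < r → r ≤ r' →
    a * (r' / r) ^ ν ≤ (μ (ball x r')).toReal / (μ (ball x r)).toReal

section Balls

variable {X : Type*} [MetricSpace X] [MeasurableSpace X] {μ : Measure X} {x : X} {d t : ℝ}

lemma IsDoublingOfOrder.toReal_measure_ball_le {A η : ℝ} (h : IsDoublingOfOrder μ A η)
    (x : X) (hd : 0 < d) (ht : 0 < t) (htd : t ≤ d ^ 2) :
    (μ (ball x d)).toReal ≤ A * (t / d ^ 2) ^ (-(η / 2)) * (μ (ball x √t)).toReal := by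
  rw [← Real.div_sqrt_rpow ht.le hd.le]
  exact h x _ _ (Real.sqrt_pos.2 ht) ((Real.sqrt_le_sqrt htd).trans_eq (Real.sqrt_sq hd.le))

lemma IsReverseDoublingOfOrder.toReal_measure_ball_le {a ν : ℝ}
    (h : IsReverseDoublingOfOrder μ a ν) (ha : 0 < a) (hV : 0 < (μ (ball x d)).toReal)
    (hd : 0 < d) (htd : d ^ 2 ≤ t) :
    (μ (ball x d)).toReal ≤ a⁻¹ * (t / d ^ 2) ^ (-(ν / 2)) * (μ (ball x √t)).toReal := by
  have ht : 0 < t := (pow_pos hd 2).trans_le htd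
  have hrd := h x d √t hd (Real.le_sqrt_of_sq_le htd)
  rw [Real.sqrt_div_rpow ht.le hd.le, le_div_iff₀ hV] at hrd
  have hu : 0 < (t / d ^ 2) ^ (ν / 2) := by positivity
  rw [Real.rpow_neg (by positivity), ← mul_inv, inv_mul_eq_div, le_div_iff₀ (by positivity)]
  linarith

end Balls

section HeatKernelIntegral

variable {s c d t : ℝ}

lemma rpow_mul_exp_mul_rpow_le_of_le_sq {A η : ℝ} (n : ℕ) (hA : 0 ≤ A) (hc : 0 < c)
    (hd : 0 < d) (ht : 0 < t) :
    t ^ (s / 2 - 1) * Real.exp (-d ^ 2 / (c * t)) * (A * (t / d ^ 2) ^ (-(η / 2))) ≤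
      A * n.factorial * c ^ n * (t ^ (s / 2 - 1) * (t / d ^ 2) ^ ((n : ℝ) - η / 2)) := by
  have hu : 0 < t / d ^ 2 := by positivity
  have hexp : Real.exp (-d ^ 2 / (c * t)) ≤ n.factorial * (c * (t / d ^ 2)) ^ n := by
    convert Real.exp_neg_inv_le_factorial_mul_pow (mul_pos hc hu) n using 3
    field_simp
  calc _ ≤ t ^ (s / 2 - 1) * (n.factorial * (c * (t / d ^ 2)) ^ n) *
        (A * (t / d ^ 2) ^ (-(η / 2))) := by gcongr
    _ = _ := by
      rw [sub_eq_add_neg _ (η / 2), Real.rpow_add hu, Real.rpow_natCast]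
      ring

lemma rpow_mul_exp_mul_rpow_le_of_sq_le {B ν : ℝ} (hB : 0 ≤ B) (hc : 0 ≤ c) (ht : 0 < t) :
    t ^ (s / 2 - 1) * Real.exp (-d ^ 2 / (c * t)) * (B * (t / d ^ 2) ^ (-(ν / 2))) ≤
      B * (t ^ (s / 2 - 1) * (t / d ^ 2) ^ (-(ν / 2))) := by
  have hexp : Real.exp (-d ^ 2 / (c * t)) ≤ 1 :=
    Real.exp_le_one_iff.2 (div_nonpos_of_nonpos_of_nonneg (neg_nonpos.2 (sq_nonneg d))
      (by positivity))
  calc _ ≤ t ^ (s / 2 - 1) * 1 * (B * (t / d ^ 2) ^ (-(ν / 2))) := by gcongr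
    _ = _ := by ring

variable {X : Type*} [MetricSpace X] [MeasurableSpace X] {μ : Measure X} {x : X}

lemma lintegral_Ioc_sq_le_of_isDoublingOfOrder {A η : ℝ} (hμ : IsDoublingOfOrder μ A η)
    (hpos : ∀ r, 0 < r → 0 < μ (ball x r)) (hfin : ∀ r, μ (ball x r) < ⊤) (hA : 0 ≤ A)
    (hc : 0 < c) (n : ℕ) (hn : η / 2 < s / 2 + n) (hd : 0 < d) :
    ∫⁻ t in Ioc 0 (d ^ 2), ENNReal.ofReal (t ^ (s / 2 - 1) * Real.exp (-d ^ 2 / (c * t))) /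
        μ (ball x √t) ≤
      ENNReal.ofReal (A * n.factorial * c ^ n / (s / 2 + (n - η / 2)) * d ^ s) /
        μ (ball x d) := by
  have hsn : 0 < s / 2 + ((n : ℝ) - η / 2) := by linarith
  calc _ ≤ ENNReal.ofReal (∫ t in Ioc 0 (d ^ 2),
          A * n.factorial * c ^ n * (t ^ (s / 2 - 1) * (t / d ^ 2) ^ ((n : ℝ) - η / 2))) /
        μ (ball x d) := by
        refine setLIntegral_le_ofReal_setIntegral_div measurableSet_Ioc (hpos d hd).ne'
          ((integrableOn_Ioc_rpow_sub_one_mul_div_rpow (by positivity) hsn).const_mul _)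
          (fun t ht ↦ by have := ht.1; positivity) ?_
        rintro t ⟨ht, htd⟩
        have hst := Real.sqrt_pos.2 ht
        exact (ENNReal.ofReal_div_le_ofReal_mul_div (hpos d hd).ne' (hfin d).ne
          (hpos _ hst).ne' (hfin _).ne (by positivity)
          (hμ.toReal_measure_ball_le x hd ht htd)).trans
          (ENNReal.div_le_div_right
            (ofReal_le_ofReal (rpow_mul_exp_mul_rpow_le_of_le_sq n hA hc hd ht)) _)
    _ = _ := by
      rw [integral_const_mul, integral_Ioc_rpow_sub_one_mul_div_rpow (by positivity) hsn,
        Real.rpow_div_two_eq_sqrt _ (sq_nonneg d), Real.sqrt_sq hd.le]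
      ring_nf

lemma lintegral_Ioi_sq_le_of_isReverseDoublingOfOrder {a ν : ℝ}
    (hμ : IsReverseDoublingOfOrder μ a ν) (hpos : ∀ r, 0 < r → 0 < μ (ball x r))
    (hfin : ∀ r, μ (ball x r) < ⊤) (ha : 0 < a) (hc : 0 ≤ c) (hsν : s < ν) (hd : 0 < d) :
    ∫⁻ t in Ioi (d ^ 2), ENNReal.ofReal (t ^ (s / 2 - 1) * Real.exp (-d ^ 2 / (c * t))) /
        μ (ball x √t) ≤
      ENNReal.ofReal (a⁻¹ / (ν / 2 - s / 2) * d ^ s) / μ (ball x d) := by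
  have hV := ENNReal.toReal_pos (hpos d hd).ne' (hfin d).ne
  calc _ ≤ ENNReal.ofReal (∫ t in Ioi (d ^ 2),
          a⁻¹ * (t ^ (s / 2 - 1) * (t / d ^ 2) ^ (-(ν / 2)))) / μ (ball x d) := by
        refine setLIntegral_le_ofReal_setIntegral_div measurableSet_Ioi (hpos d hd).ne'
          ((integrableOn_Ioi_rpow_sub_one_mul_div_rpow_neg (by positivity)
            (by linarith)).const_mul _)
          (fun t ht ↦ by have := (sq_nonneg d).trans_lt ht; positivity) ?_
        intro t htd
        have ht := (sq_nonneg d).trans_lt htd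
        exact (ENNReal.ofReal_div_le_ofReal_mul_div (hpos d hd).ne' (hfin d).ne
          (hpos _ (Real.sqrt_pos.2 ht)).ne' (hfin _).ne (by positivity)
          (hμ.toReal_measure_ball_le ha hV hd htd.le)).trans
          (ENNReal.div_le_div_right (ofReal_le_ofReal
            (rpow_mul_exp_mul_rpow_le_of_sq_le (inv_nonneg.2 ha.le) hc ht)) _)
    _ = _ := by
      rw [integral_const_mul, integral_Ioi_rpow_sub_one_mul_div_rpow_neg (by positivity)
          (by linarith), Real.rpow_div_two_eq_sqrt _ (sq_nonneg d), Real.sqrt_sq hd.le]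
      ring_nf

end HeatKernelIntegral

theorem stmt15_general {X : Type*} [MetricSpace X] [MeasurableSpace X] (μ : Measure X)
    (hpos : ∀ (x : X) (r : ℝ), 0 < r → 0 < μ (ball x r))
    (hfin : ∀ (x : X) (r : ℝ), μ (ball x r) < ⊤)
    (A η a ν s c : ℝ) (hA : 1 < A) (ha : 0 < a) (hsν : s < ν) (hc : 4 < c)
    (hdoub : ∀ (x : X) (r r' : ℝ), 0 < r → r ≤ r' →
      (μ (ball x r')).toReal ≤ A * (r' / r) ^ η * (μ (ball x r)).toReal)
    (hrd : ∀ (x : X) (r r' : ℝ), 0 < r → r ≤ r' →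
      a * (r' / r) ^ ν ≤ (μ (ball x r')).toReal / (μ (ball x r)).toReal) :
    ∃ C > (0:ℝ), ∀ x y : X, x ≠ y →
      (∫⁻ t in Set.Ioi (0:ℝ),
          ENNReal.ofReal (t ^ (s / 2 - 1) * Real.exp (-(dist x y) ^ 2 / (c * t))) /
            μ (ball x (Real.sqrt t))) ≤
        ENNReal.ofReal (C * dist x y ^ s) / μ (ball x (dist x y)) := by
  obtain ⟨n, hn⟩ := exists_nat_gt ((η - s) / 2)
  have hA₀ : 0 < A := by linarith
  have hsn : 0 < s / 2 + (n - η / 2) := by linarith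
  have hνs : 0 < ν / 2 - s / 2 := by linarith
  refine ⟨A * n.factorial * c ^ n / (s / 2 + (n - η / 2)) + a⁻¹ / (ν / 2 - s / 2),
    by positivity, fun x y hxy ↦ ?_⟩
  have hd := dist_pos.2 hxy
  rw [← Ioc_union_Ioi_eq_Ioi (sq_nonneg (dist x y)),
    lintegral_union measurableSet_Ioi Ioc_disjoint_Ioi_same, add_mul,
    ENNReal.ofReal_add (by positivity) (by positivity), ENNReal.add_div]
  exact add_le_add
    (lintegral_Ioc_sq_le_of_isDoublingOfOrder hdoub (hpos x) (hfin x) hA₀.le (by linarith) n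
      (by linarith) hd)
    (lintegral_Ioi_sq_le_of_isReverseDoublingOfOrder hrd (hpos x) (hfin x) ha (by linarith)
      hsν hd)

theorem stmt15 {X : Type*} [MetricSpace X] [MeasurableSpace X] (μ : Measure X)
    (hpos : ∀ (x : X) (r : ℝ), 0 < r → 0 < μ (ball x r))
    (hfin : ∀ (x : X) (r : ℝ), μ (ball x r) < ⊤)
    (A η a ν s c : ℝ) (hA : 1 < A) (ha : 0 < a) (hs : 0 < s) (hsν : s < ν) (hc : 4 < c)
    (hdoub : ∀ (x : X) (r r' : ℝ), 0 < r → r ≤ r' →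
      (μ (ball x r')).toReal ≤ A * (r' / r) ^ η * (μ (ball x r)).toReal)
    (hrd : ∀ (x : X) (r r' : ℝ), 0 < r → r ≤ r' →
      a * (r' / r) ^ ν ≤ (μ (ball x r')).toReal / (μ (ball x r)).toReal) :
    ∃ C > (0:ℝ), ∀ x y : X, x ≠ y →
      (∫⁻ t in Set.Ioi (0:ℝ),
          ENNReal.ofReal (t ^ (s / 2 - 1) * Real.exp (-(dist x y) ^ 2 / (c * t))) /
            μ (ball x (Real.sqrt t))) ≤
        ENNReal.ofReal (C * dist x y ^ s) / μ (ball x (dist x y)) :=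
  stmt15_general μ hpos hfin A η a ν s c hA ha hsν hc hdoub hrd
end

section
/- Let (M,g,mu) be a weighted Riemannian manifold satisfying the relative Faber-Krahn inequality and the reverse doubling property of order nu > 2 (with the doubling of order eta implied by Faber-Krahn). Fix o in M and p with 1 < p < nu/2. Then there is a constant K_p, depending only on p and the doubling and reverse doubling constants, such that for all x in M and r > 0: r^2 * ( (1/mu(B(x,r))) * integral over B(x,r) of d(o,y)^{-2p} dmu(y) )^{1/p} <= K_p. In particular the Morrey norm N_p of the potential V(y) = d(o,y)^{-2} is finite. -/
open MeasureTheory Metric Set ENNReal NNReal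

/-!
Split `B(o, R)` into the dyadic annuli `B(o, R 2⁻ʲ) \ B(o, R 2⁻ʲ⁻¹)`. On the `j`-th annulus
`d(o, ·)^(-q) ≤ (R 2⁻ʲ⁻¹)^(-q)`, while reverse doubling gives
`μ B(o, R 2⁻ʲ) ≤ a⁻¹ 2^(-jν) μ B(o, R)`; the resulting series is geometric with ratio
`2^(q - ν) < 1`, so the integral over `B(o, R)` is at most `C R^(-q) μ B(o, R)`. A general ball
`B(x, r)` either stays at distance `≥ r` from `o`, where the integrand is at most `r^(-q)`, or
lies in `B(o, 3r) ⊆ B(x, 5r)`, and doubling compares `μ B(x, 5r)` with `μ B(x, r)`.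
Here `q = 2p`.
-/

def IsDoubling {X : Type*} [PseudoMetricSpace X] [MeasurableSpace X] (μ : Measure X)
    (A η : ℝ) : Prop :=
  ∀ (x : X) (r r' : ℝ), 0 < r → r ≤ r' →
    (μ (ball x r')).toReal ≤ A * (r' / r) ^ η * (μ (ball x r)).toReal

def IsReverseDoubling {X : Type*} [PseudoMetricSpace X] [MeasurableSpace X] (μ : Measure X)
    (a ν : ℝ) : Prop :=
  ∀ (x : X) (r r' : ℝ), 0 < r → r ≤ r' →
    a * (r' / r) ^ ν ≤ (μ (ball x r')).toReal / (μ (ball x r)).toReal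

theorem setLIntegral_le_mul_measure {α : Type*} [MeasurableSpace α] {μ : Measure α} {s : Set α}
    {f : α → ℝ≥0∞} {c : ℝ≥0∞} (h : ∀ y ∈ s, f y ≤ c) : ∫⁻ y in s, f y ∂μ ≤ c * μ s :=
  (setLIntegral_mono measurable_const h).trans_eq (setLIntegral_const s c)

theorem exists_dyadic_annulus_mem {d R : ℝ} (hd : 0 < d) (hdR : d < R) :
    ∃ j : ℕ, R / 2 ^ (j + 1) ≤ d ∧ d < R / 2 ^ j := by
  have hex : ∃ n : ℕ, R / 2 ^ (n + 1) ≤ d := by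
    obtain ⟨n, hn⟩ := pow_unbounded_of_one_lt (R / d) one_lt_two
    refine ⟨n, div_le_of_le_mul₀ (by positivity) hd.le ?_⟩
    rw [div_lt_iff₀ hd] at hn
    rw [pow_succ]
    nlinarith [pow_pos (two_pos (α := ℝ)) n]
  refine ⟨Nat.find hex, Nat.find_spec hex, ?_⟩
  rcases h : Nat.find hex with _ | k
  · simpa using hdR
  · exact not_le.1 (Nat.find_min hex (h ▸ k.lt_succ_self))

theorem div_two_pow_succ_rpow_neg_mul_rpow (q ν : ℝ) {R : ℝ} (hR : 0 < R) (j : ℕ) :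
    (R / 2 ^ (j + 1)) ^ (-q) * (R / 2 ^ j / R) ^ ν = 2 ^ q * R ^ (-q) * ((2 : ℝ) ^ (q - ν)) ^ j := by
  have e1 : (R / 2 ^ (j + 1)) ^ (-q) = R ^ (-q) * (2 : ℝ) ^ (((j : ℝ) + 1) * q) := by
    rw [Real.div_rpow hR.le (by positivity), div_eq_mul_inv, ← Real.rpow_neg (by positivity),
      neg_neg, ← Real.rpow_natCast, ← Real.rpow_mul (by norm_num)]
    push_cast
    ring_nf
  have e2 : (R / 2 ^ j / R) ^ ν = (2 : ℝ) ^ (-((j : ℝ) * ν)) := by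
    rw [div_div_cancel_left' hR.ne', ← Real.rpow_natCast, ← Real.rpow_neg_one,
      ← Real.rpow_mul (by norm_num), ← Real.rpow_mul (by norm_num)]
    ring_nf
  have e3 : ((2 : ℝ) ^ (q - ν)) ^ j = (2 : ℝ) ^ ((q - ν) * j) := by
    rw [← Real.rpow_natCast, ← Real.rpow_mul (by norm_num)]
  have e4 : (2 : ℝ) ^ (((j : ℝ) + 1) * q) * 2 ^ (-((j : ℝ) * ν)) = 2 ^ q * 2 ^ ((q - ν) * j) := by
    rw [← Real.rpow_add two_pos, ← Real.rpow_add two_pos]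
    ring_nf
  rw [e1, e2, e3]
  linear_combination R ^ (-q) * e4

section

variable {X : Type*} [PseudoMetricSpace X]

theorem ball_subset_union_iUnion_annulus (o : X) (R : ℝ) :
    ball o R ⊆ {y | dist o y = 0} ∪ ⋃ j : ℕ, ball o (R / 2 ^ j) \ ball o (R / 2 ^ (j + 1)) := by
  intro y hy
  rcases (dist_nonneg (x := o) (y := y)).eq_or_lt with h0 | hpos
  · exact Or.inl h0.symm
  · obtain ⟨j, hj⟩ := exists_dyadic_annulus_mem hpos (mem_ball'.1 hy)
    exact Or.inr (mem_iUnion.2 ⟨j, mem_ball'.2 hj.2, fun h => (mem_ball'.1 h).not_ge hj.1⟩)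

variable [MeasurableSpace X] {μ : Measure X}

theorem IsDoubling.measure_ball_le {A η : ℝ} (hdoub : IsDoubling μ A η) (x : X) {r r' : ℝ}
    (hr : 0 < r) (hrr' : r ≤ r') (hr'fin : μ (ball x r') ≠ ∞) (hrfin : μ (ball x r) ≠ ∞) :
    μ (ball x r') ≤ ENNReal.ofReal (A * (r' / r) ^ η) * μ (ball x r) := by
  rw [← ofReal_toReal hr'fin, ← ofReal_toReal hrfin, ← ofReal_mul' toReal_nonneg]
  exact ofReal_le_ofReal (hdoub x r r' hr hrr')

namespace IsReverseDoubling

variable {a ν : ℝ}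

theorem toReal_measure_ball_pos (hrd : IsReverseDoubling μ a ν) (ha : 0 < a) (x : X) {r : ℝ}
    (hr : 0 < r) : 0 < (μ (ball x r)).toReal := by
  have h := hrd x r r hr le_rfl
  rw [div_self hr.ne', Real.one_rpow, mul_one] at h
  refine toReal_nonneg.lt_of_ne fun h0 => ?_
  rw [← h0, zero_div] at h
  linarith

theorem measure_ball_ne_top (hrd : IsReverseDoubling μ a ν) (ha : 0 < a) (x : X) {r : ℝ}
    (hr : 0 < r) : μ (ball x r) ≠ ∞ :=
  (toReal_pos_iff.1 (hrd.toReal_measure_ball_pos ha x hr)).2.ne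

theorem measure_ball_le (hrd : IsReverseDoubling μ a ν) (ha : 0 < a) (x : X) {r R : ℝ}
    (hr : 0 < r) (hrR : r ≤ R) :
    μ (ball x r) ≤ ENNReal.ofReal (a⁻¹ * (r / R) ^ ν) * μ (ball x R) := by
  have hR := hr.trans_le hrR
  have h := (le_div_iff₀ (hrd.toReal_measure_ball_pos ha x hr)).1 (hrd x r R hr hrR)
  rw [← ofReal_toReal (hrd.measure_ball_ne_top ha x hr),
    ← ofReal_toReal (hrd.measure_ball_ne_top ha x hR), ← ofReal_mul' toReal_nonneg]
  refine ofReal_le_ofReal ?_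
  have hscale : (r / R) ^ ν = ((R / r) ^ ν)⁻¹ := by
    rw [← Real.inv_rpow (by positivity), inv_div]
  rw [hscale, ← mul_inv, le_inv_mul_iff₀ (by positivity)]
  exact h

theorem lintegral_ball_rpow_neg_dist_le (hrd : IsReverseDoubling μ a ν) (ha : 0 < a) {q : ℝ}
    (hq : 0 < q) (hqν : q < ν) (o : X) {R : ℝ} (hR : 0 < R) :
    ∫⁻ y in ball o R, ENNReal.ofReal (dist o y ^ (-q)) ∂μ ≤
      ENNReal.ofReal (2 ^ q * a⁻¹ * (1 - 2 ^ (q - ν))⁻¹ * R ^ (-q)) * μ (ball o R) := by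
  set f : X → ℝ≥0∞ := fun y => ENNReal.ofReal (dist o y ^ (-q))
  set t : ℝ := 2 ^ (q - ν)
  have ht0 : 0 ≤ t := by positivity
  have ht1 : t < 1 := Real.rpow_lt_one_of_one_lt_of_neg one_lt_two (by linarith)
  -- `0 ^ (-q) = 0` in Lean, so the integrand vanishes at the pole.
  have hcentre : ∫⁻ y in {y | dist o y = 0}, f y ∂μ = 0 := by
    refine le_antisymm ((setLIntegral_le_mul_measure fun y hy => ?_).trans_eq (zero_mul _)) zero_le
    simp [f, hy.out, Real.zero_rpow (neg_ne_zero.2 hq.ne')]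
  have hannulus : ∀ j : ℕ, ∫⁻ y in ball o (R / 2 ^ j) \ ball o (R / 2 ^ (j + 1)), f y ∂μ ≤
      ENNReal.ofReal (2 ^ q * a⁻¹ * R ^ (-q) * t ^ j) * μ (ball o R) := by
    intro j
    calc ∫⁻ y in ball o (R / 2 ^ j) \ ball o (R / 2 ^ (j + 1)), f y ∂μ
        ≤ ENNReal.ofReal ((R / 2 ^ (j + 1)) ^ (-q)) * μ (ball o (R / 2 ^ j)) := by
          refine (setLIntegral_le_mul_measure fun y hy => ofReal_le_ofReal ?_).trans
            (by gcongr; exact sdiff_subset)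
          exact Real.rpow_le_rpow_of_nonpos (by positivity)
            (not_lt.1 fun h => hy.2 (mem_ball'.2 h)) (by linarith)
      _ ≤ ENNReal.ofReal ((R / 2 ^ (j + 1)) ^ (-q)) *
            (ENNReal.ofReal (a⁻¹ * (R / 2 ^ j / R) ^ ν) * μ (ball o R)) := by
          gcongr
          exact hrd.measure_ball_le ha o (by positivity)
            (div_le_self hR.le (one_le_pow₀ one_le_two))
      _ = _ := by
          rw [← mul_assoc, ← ofReal_mul (by positivity)]
          congr 2
          linear_combination a⁻¹ * div_two_pow_succ_rpow_neg_mul_rpow q ν hR j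
  calc ∫⁻ y in ball o R, f y ∂μ
      ≤ ∫⁻ y in {y | dist o y = 0} ∪
          ⋃ j : ℕ, ball o (R / 2 ^ j) \ ball o (R / 2 ^ (j + 1)), f y ∂μ :=
        lintegral_mono_set (ball_subset_union_iUnion_annulus o R)
    _ ≤ ∫⁻ y in {y | dist o y = 0}, f y ∂μ +
          ∑' j : ℕ, ∫⁻ y in ball o (R / 2 ^ j) \ ball o (R / 2 ^ (j + 1)), f y ∂μ :=
        (lintegral_union_le _ _ _).trans (add_le_add le_rfl (lintegral_iUnion_le _ _))
    _ ≤ ∑' j : ℕ, ENNReal.ofReal (2 ^ q * a⁻¹ * R ^ (-q) * t ^ j) * μ (ball o R) := by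
        rw [hcentre, zero_add]
        exact ENNReal.tsum_le_tsum hannulus
    _ = _ := by
        rw [ENNReal.tsum_mul_right, ← ofReal_tsum_of_nonneg (fun j => by positivity)
          ((summable_geometric_of_lt_one ht0 ht1).mul_left _), _root_.tsum_mul_left,
          tsum_geometric_of_lt_one ht0 ht1]
        ring_nf

end IsReverseDoubling

theorem exists_lintegral_ball_rpow_neg_dist_le {A η a ν q : ℝ} (hdoub : IsDoubling μ A η)
    (hrd : IsReverseDoubling μ a ν) (ha : 0 < a) (hq : 0 < q) (hqν : q < ν) (o : X) :
    ∃ K > 0, ∀ (x : X) (r : ℝ), 0 < r →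
      ∫⁻ y in ball x r, ENNReal.ofReal (dist o y ^ (-q)) ∂μ ≤
        ENNReal.ofReal (K * r ^ (-q)) * μ (ball x r) := by
  set C := 2 ^ q * a⁻¹ * (1 - 2 ^ (q - ν))⁻¹
  have hC : 0 ≤ C := by
    have : (2 : ℝ) ^ (q - ν) < 1 := Real.rpow_lt_one_of_one_lt_of_neg one_lt_two (by linarith)
    have : 0 < 1 - (2 : ℝ) ^ (q - ν) := by linarith
    positivity
  refine ⟨max 1 (C * 3 ^ (-q) * (A * 5 ^ η)), lt_max_of_lt_left one_pos, fun x r hr => ?_⟩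
  rcases le_or_gt (2 * r) (dist o x) with hfar | hnear
  · calc _ ≤ ENNReal.ofReal (r ^ (-q)) * μ (ball x r) := by
          refine setLIntegral_le_mul_measure fun y hy => ofReal_le_ofReal ?_
          refine Real.rpow_le_rpow_of_nonpos hr ?_ (by linarith)
          linarith [mem_ball.1 hy, dist_triangle o y x]
      _ ≤ _ := by
          gcongr
          exact le_mul_of_one_le_left (by positivity) (le_max_left _ _)
  · have hsub : ball x r ⊆ ball o (3 * r) := fun y hy => by
      rw [mem_ball, dist_comm o x] at *
      linarith [dist_triangle y x o]
    have hsub' : ball o (3 * r) ⊆ ball x (5 * r) := fun y hy => by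
      rw [mem_ball] at *
      linarith [dist_triangle y o x]
    calc _ ≤ ∫⁻ y in ball o (3 * r), ENNReal.ofReal (dist o y ^ (-q)) ∂μ := lintegral_mono_set hsub
      _ ≤ ENNReal.ofReal (C * (3 * r) ^ (-q)) * μ (ball o (3 * r)) :=
          hrd.lintegral_ball_rpow_neg_dist_le ha hq hqν o (by positivity)
      _ ≤ ENNReal.ofReal (C * (3 * r) ^ (-q)) *
            (ENNReal.ofReal (A * (5 * r / r) ^ η) * μ (ball x r)) := by
          gcongr
          exact (measure_mono hsub').trans (hdoub.measure_ball_le x hr (by linarith)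
            (hrd.measure_ball_ne_top ha x (by positivity)) (hrd.measure_ball_ne_top ha x hr))
      _ = ENNReal.ofReal (C * 3 ^ (-q) * (A * 5 ^ η) * r ^ (-q)) * μ (ball x r) := by
          rw [← mul_assoc, ← ofReal_mul (by positivity), mul_div_cancel_right₀ _ hr.ne',
            Real.mul_rpow (by norm_num) hr.le]
          ring_nf
      _ ≤ _ := by
          gcongr
          exact le_max_right _ _

end

theorem stmt16_general {X : Type*} [MetricSpace X] [MeasurableSpace X] (μ : Measure X)
    (A η a ν : ℝ) (ha : 0 < a)
    (hdoub : ∀ (x : X) (r r' : ℝ), 0 < r → r ≤ r' →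
      (μ (ball x r')).toReal ≤ A * (r' / r) ^ η * (μ (ball x r)).toReal)
    (hrd : ∀ (x : X) (r r' : ℝ), 0 < r → r ≤ r' →
      a * (r' / r) ^ ν ≤ (μ (ball x r')).toReal / (μ (ball x r)).toReal)
    (o : X) (p : ℝ) (hp : 1 < p) (hpν : p < ν / 2) :
    ∃ K > (0:ℝ), ∀ (x : X) (r : ℝ), 0 < r →
      (∫⁻ y in ball x r, ENNReal.ofReal (dist o y ^ (-(2 * p))) ∂μ) / μ (ball x r) ≤
        ENNReal.ofReal ((K / r ^ 2) ^ p) := by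
  have hp0 : 0 < p := by linarith
  obtain ⟨K, hK, hbound⟩ := exists_lintegral_ball_rpow_neg_dist_le (q := 2 * p) hdoub hrd ha
    (by linarith) (by linarith) o
  refine ⟨K ^ p⁻¹, by positivity, fun x r hr => ENNReal.div_le_of_le_mul ?_⟩
  have hpow : (K ^ p⁻¹ / r ^ 2) ^ p = K * r ^ (-(2 * p)) := by
    rw [Real.div_rpow (by positivity) (by positivity), ← Real.rpow_mul hK.le,
      inv_mul_cancel₀ hp0.ne', Real.rpow_one, ← Real.rpow_natCast, ← Real.rpow_mul hr.le,
      Real.rpow_neg (by positivity), div_eq_mul_inv]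
    push_cast
    ring_nf
  rw [hpow]
  exact hbound x r hr

theorem stmt16 {X : Type*} [MetricSpace X] [MeasurableSpace X] (μ : Measure X)
    (hpos : ∀ (x : X) (r : ℝ), 0 < r → 0 < μ (ball x r))
    (hfin : ∀ (x : X) (r : ℝ), μ (ball x r) < ⊤)
    (A η a ν : ℝ) (hA : 1 < A) (ha : 0 < a) (hν : 2 < ν)
    (hdoub : ∀ (x : X) (r r' : ℝ), 0 < r → r ≤ r' →
      (μ (ball x r')).toReal ≤ A * (r' / r) ^ η * (μ (ball x r)).toReal)
    (hrd : ∀ (x : X) (r r' : ℝ), 0 < r → r ≤ r' →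
      a * (r' / r) ^ ν ≤ (μ (ball x r')).toReal / (μ (ball x r)).toReal)
    (o : X) (p : ℝ) (hp : 1 < p) (hpν : p < ν / 2) :
    ∃ K > (0:ℝ), ∀ (x : X) (r : ℝ), 0 < r →
      (∫⁻ y in ball x r, ENNReal.ofReal (dist o y ^ (-(2 * p))) ∂μ) / μ (ball x r) ≤
        ENNReal.ofReal ((K / r ^ 2) ^ p) :=
  stmt16_general μ A η a ν ha hdoub hrd o p hp hpν
end
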